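/- Let n ≥ 3, p > (n+2)/(n-2), and σ = 2/(p-1). Let w : ℝⁿ → ℝ satisfy 0 < w(x) ≤ C₀ (1+|x|)^{-2/(p-1)}, and define N(φ) = −(w+φ)^p + w^p + p w^{p-1} φ. Then there is a constant C > 0 such that for every function φ on ℝⁿ with w + φ ≥ 0 and ‖φ‖* < ∞, one has ‖N(φ)‖** ≤ C (‖φ‖*² + ‖φ‖*^p) if p ≥ 2, and ‖N(φ)‖** ≤ C ‖φ‖*^p if 1 < p < 2; in either case ‖N(φ)‖** ≤ C (‖φ‖*² + ‖φ‖*^p). -/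

import Mathlib

open Set Filter Topology ENNReal

/-!
With `R(a, t) = (a + t)^p - a^p - p a^{p-1} t`, the nonlinear term is `N(φ) = -R(w, φ)` and
`R ≥ 0` by convexity. `R` is homogeneous of degree `p` and `σ = 2/(p-1)` satisfies
`σ p = 2 + σ`, so `|x|^{2+σ} |N(φ)(x)| = R(|x|^σ w(x), |x|^σ φ(x))`, where `|x|^σ w(x) ≤ C₀` and
`|x|^σ |φ(x)| ≤ ‖φ‖*`. On that box, convexity again gives
`R(a, t) ≤ p |(a + t)^{p-1} - a^{p-1}| |t|`; the difference is at most `|t|^{p-1}` when `p ≤ 2`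
(Hölder continuity of `u^{p-1}`) and at most `(p-1)(a + |t|)^{p-2} |t|` when `p ≥ 2`.
-/

/-- The weighted norm `‖φ‖* = sup_{|x|≤1} |x|^σ |φ(x)| + sup_{|x|≥1} |x|^{2/(p-1)} |φ(x)|`
(valued in `ℝ≥0∞`). -/
noncomputable def normStar (n : ℕ) (p σ : ℝ) (φ : EuclideanSpace ℝ (Fin n) → ℝ) : ℝ≥0∞ :=
  (⨆ x : {x : EuclideanSpace ℝ (Fin n) // ‖x‖ ≤ 1}, ENNReal.ofReal (‖x.1‖ ^ σ * |φ x.1|)) +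
  ⨆ x : {x : EuclideanSpace ℝ (Fin n) // 1 ≤ ‖x‖}, ENNReal.ofReal (‖x.1‖ ^ (2 / (p - 1)) * |φ x.1|)

/-- The weighted norm
`‖h‖** = sup_{|x|≤1} |x|^{2+σ} |h(x)| + sup_{|x|≥1} |x|^{2+2/(p-1)} |h(x)|`
(valued in `ℝ≥0∞`). -/
noncomputable def normStarStar (n : ℕ) (p σ : ℝ) (h : EuclideanSpace ℝ (Fin n) → ℝ) : ℝ≥0∞ :=
  (⨆ x : {x : EuclideanSpace ℝ (Fin n) // ‖x‖ ≤ 1},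
    ENNReal.ofReal (‖x.1‖ ^ (2 + σ) * |h x.1|)) +
  ⨆ x : {x : EuclideanSpace ℝ (Fin n) // 1 ≤ ‖x‖},
    ENNReal.ofReal (‖x.1‖ ^ (2 + 2 / (p - 1)) * |h x.1|)

lemma one_lt_of_add_two_div_sub_two_lt {n p : ℝ} (hn : 2 < n) (hp : (n + 2) / (n - 2) < p) :
    1 < p :=
  ((one_lt_div (sub_pos.2 hn)).2 (by linarith)).trans hp

namespace Real

lemma tangent_le_rpow {q u v : ℝ} (hq : 1 ≤ q) (hu : 0 ≤ u) (hv : 0 ≤ v) :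
    v ^ q + q * v ^ (q - 1) * (u - v) ≤ u ^ q := by
  rcases hv.eq_or_lt with rfl | hv
  · rcases hq.eq_or_lt with rfl | hq
    · simp
    · simp [zero_rpow (by linarith : q ≠ 0), zero_rpow (by linarith : q - 1 ≠ 0),
        rpow_nonneg hu]
  have hs : -1 ≤ (u - v) / v := by rw [le_div_iff₀ hv]; linarith
  have bernoulli := one_add_mul_self_le_rpow_one_add hs hq
  have hsplit : 1 + (u - v) / v = u / v := by field_simp; ring
  rw [hsplit, div_rpow hu hv.le, le_div_iff₀ (rpow_pos_of_pos hv q)] at bernoulli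
  calc v ^ q + q * v ^ (q - 1) * (u - v) = (1 + q * ((u - v) / v)) * v ^ q := by
        rw [rpow_sub_one hv.ne']; field_simp
    _ ≤ u ^ q := bernoulli

lemma abs_rpow_sub_rpow_le_rpow_abs_sub {q x y : ℝ} (hq₀ : 0 ≤ q) (hq₁ : q ≤ 1)
    (hx : 0 ≤ x) (hy : 0 ≤ y) : |x ^ q - y ^ q| ≤ |x - y| ^ q := by
  wlog hyx : y ≤ x generalizing x y
  · rw [abs_sub_comm, abs_sub_comm x]; exact this hy hx (le_of_not_ge hyx)
  have hsub : x ^ q ≤ (x - y) ^ q + y ^ q := by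
    simpa using rpow_add_le_add_rpow (sub_nonneg.2 hyx) hy hq₀ hq₁
  rw [abs_of_nonneg (sub_nonneg.2 (rpow_le_rpow hy hyx hq₀)), abs_of_nonneg (sub_nonneg.2 hyx)]
  linarith

lemma abs_rpow_sub_rpow_le_mul_max {q x y : ℝ} (hq : 1 ≤ q) (hx : 0 ≤ x) (hy : 0 ≤ y) :
    |x ^ q - y ^ q| ≤ q * max x y ^ (q - 1) * |x - y| := by
  wlog hyx : y ≤ x generalizing x y
  · rw [abs_sub_comm, abs_sub_comm x, max_comm]; exact this hy hx (le_of_not_ge hyx)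
  have := tangent_le_rpow hq hy hx
  rw [max_eq_left hyx, abs_of_nonneg (sub_nonneg.2 (rpow_le_rpow hy hyx (by linarith))),
    abs_of_nonneg (sub_nonneg.2 hyx)]
  linarith

lemma add_rpow_le_two_rpow_mul_rpow_add_rpow {s x y : ℝ} (hs : 0 ≤ s) (hx : 0 ≤ x)
    (hy : 0 ≤ y) : (x + y) ^ s ≤ 2 ^ s * (x ^ s + y ^ s) := calc
  (x + y) ^ s ≤ (2 * max x y) ^ s := by
    rw [two_mul]; gcongr
    · exact le_max_left x y
    · exact le_max_right x y
  _ = 2 ^ s * max x y ^ s := mul_rpow zero_le_two (le_max_of_le_left hx)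
  _ = 2 ^ s * max (x ^ s) (y ^ s) := by rw [rpow_max hx hy hs]
  _ ≤ 2 ^ s * (x ^ s + y ^ s) := by
    gcongr; exact max_le_add_of_nonneg (rpow_nonneg hx s) (rpow_nonneg hy s)

end Real

noncomputable def powRemainder (p a t : ℝ) : ℝ := (a + t) ^ p - a ^ p - p * a ^ (p - 1) * t

noncomputable def nonlinearTerm {E : Type*} (p : ℝ) (w φ : E → ℝ) (x : E) : ℝ :=
  -(w x + φ x) ^ p + w x ^ p + p * w x ^ (p - 1) * φ x

section powRemainder

open Real

variable {p a t : ℝ}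

lemma powRemainder_nonneg (hp : 1 ≤ p) (ha : 0 ≤ a) (hat : 0 ≤ a + t) :
    0 ≤ powRemainder p a t := by
  have := tangent_le_rpow hp hat ha
  rw [powRemainder]; linarith

lemma powRemainder_le_mul_abs (hp : 1 ≤ p) (ha : 0 ≤ a) (hat : 0 ≤ a + t) :
    powRemainder p a t ≤ p * |(a + t) ^ (p - 1) - a ^ (p - 1)| * |t| := by
  have tangent := tangent_le_rpow hp ha hat
  calc powRemainder p a t ≤ p * (((a + t) ^ (p - 1) - a ^ (p - 1)) * t) := by
        rw [powRemainder]; linarith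
    _ ≤ p * |((a + t) ^ (p - 1) - a ^ (p - 1)) * t| := by gcongr; exact le_abs_self _
    _ = p * |(a + t) ^ (p - 1) - a ^ (p - 1)| * |t| := by rw [abs_mul, mul_assoc]

lemma powRemainder_le_of_le_two (hp₁ : 1 ≤ p) (hp₂ : p ≤ 2) (ha : 0 ≤ a) (hat : 0 ≤ a + t) :
    powRemainder p a t ≤ p * |t| ^ p := calc
  powRemainder p a t ≤ p * |(a + t) ^ (p - 1) - a ^ (p - 1)| * |t| :=
    powRemainder_le_mul_abs hp₁ ha hat
  _ ≤ p * |t| ^ (p - 1) * |t| := by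
    gcongr
    simpa using abs_rpow_sub_rpow_le_rpow_abs_sub (by linarith) (by linarith) hat ha
  _ = p * |t| ^ p := by
    rw [mul_assoc, ← rpow_add_one' (abs_nonneg t) (by linarith), sub_add_cancel]

lemma powRemainder_le_of_two_le (hp : 2 ≤ p) (ha : 0 ≤ a) (hat : 0 ≤ a + t) :
    powRemainder p a t ≤ p * (p - 1) * 2 ^ (p - 2) * (a ^ (p - 2) * t ^ 2 + |t| ^ p) := calc
  powRemainder p a t ≤ p * |(a + t) ^ (p - 1) - a ^ (p - 1)| * |t| :=
    powRemainder_le_mul_abs (by linarith) ha hat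
  _ ≤ p * ((p - 1) * (a + |t|) ^ (p - 2) * |t|) * |t| := by
    have hmax : max (a + t) a ≤ a + |t| := max_le (by linarith [le_abs_self t]) (by simp)
    have := abs_rpow_sub_rpow_le_mul_max (q := p - 1) (by linarith) hat ha
    rw [show p - 1 - 1 = p - 2 by ring, add_sub_cancel_left] at this
    gcongr
    exact this.trans (by gcongr; linarith)
  _ = p * (p - 1) * (a + |t|) ^ (p - 2) * t ^ 2 := by rw [← sq_abs t]; ring
  _ ≤ p * (p - 1) * (2 ^ (p - 2) * (a ^ (p - 2) + |t| ^ (p - 2))) * t ^ 2 := by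
    have : 0 ≤ p - 1 := by linarith
    gcongr
    exact add_rpow_le_two_rpow_mul_rpow_add_rpow (by linarith) ha (abs_nonneg t)
  _ = p * (p - 1) * 2 ^ (p - 2) * (a ^ (p - 2) * t ^ 2 + |t| ^ p) := by
    have : |t| ^ (p - 2) * t ^ 2 = |t| ^ p := by
      rw [← sq_abs t, ← Real.rpow_two, ← rpow_add' (abs_nonneg t) (by linarith), sub_add_cancel]
    linear_combination p * (p - 1) * 2 ^ (p - 2) * this

lemma powRemainder_mul_mul (hp : 0 < p) {c : ℝ} (hc : 0 ≤ c) (ha : 0 ≤ a) (hat : 0 ≤ a + t) :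
    powRemainder p (c * a) (c * t) = c ^ p * powRemainder p a t := by
  rcases hc.eq_or_lt with rfl | hc
  · simp [powRemainder, zero_rpow hp.ne']
  rw [powRemainder, powRemainder, ← mul_add, mul_rpow hc.le hat, mul_rpow hc.le ha,
    mul_rpow hc.le ha, rpow_sub_one hc.ne']
  field_simp

lemma powRemainder_le_of_two_le_of_le {C m : ℝ} (hp : 2 ≤ p) (ha : 0 ≤ a) (haC : a ≤ C)
    (hat : 0 ≤ a + t) (ht : |t| ≤ m) :
    powRemainder p a t ≤ p * (p - 1) * 2 ^ (p - 2) * (1 + C ^ (p - 2)) * (m ^ 2 + m ^ p) := by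
  have hm : 0 ≤ m := (abs_nonneg t).trans ht
  have hC : 0 ≤ C := ha.trans haC
  have : 0 ≤ p - 1 := by linarith
  calc powRemainder p a t ≤ p * (p - 1) * 2 ^ (p - 2) * (a ^ (p - 2) * t ^ 2 + |t| ^ p) :=
        powRemainder_le_of_two_le hp ha hat
    _ ≤ p * (p - 1) * 2 ^ (p - 2) * (C ^ (p - 2) * m ^ 2 + m ^ p) := by
        rw [← sq_abs t]; gcongr
    _ ≤ p * (p - 1) * 2 ^ (p - 2) * ((1 + C ^ (p - 2)) * (m ^ 2 + m ^ p)) := by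
        have : 0 ≤ C ^ (p - 2) * m ^ p := by positivity
        gcongr; nlinarith [sq_nonneg m]
    _ = p * (p - 1) * 2 ^ (p - 2) * (1 + C ^ (p - 2)) * (m ^ 2 + m ^ p) := by ring

lemma powRemainder_le_of_le_two_of_le {m : ℝ} (hp₁ : 1 ≤ p) (hp₂ : p ≤ 2) (ha : 0 ≤ a)
    (hat : 0 ≤ a + t) (ht : |t| ≤ m) : powRemainder p a t ≤ p * m ^ p :=
  (powRemainder_le_of_le_two hp₁ hp₂ ha hat).trans (by gcongr)

end powRemainder

lemma Real.rpow_mul_le_of_le_mul_one_add_rpow_neg {r σ a C : ℝ} (hr : 0 ≤ r) (hσ : 0 ≤ σ)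
    (hC : 0 ≤ C) (ha : a ≤ C * (1 + r) ^ (-σ)) : r ^ σ * a ≤ C := calc
  r ^ σ * a ≤ r ^ σ * (C * (1 + r) ^ (-σ)) := by gcongr
  _ ≤ (1 + r) ^ σ * (C * (1 + r) ^ (-σ)) := by gcongr; linarith
  _ = C := by rw [Real.rpow_neg (by positivity)]; field_simp

lemma ENNReal.ofReal_toReal_rpow {M : ℝ≥0∞} (hM : M ≠ ⊤) {p : ℝ} (hp : 0 ≤ p) :
    ENNReal.ofReal (M.toReal ^ p) = M ^ p := by
  rw [← ENNReal.ofReal_rpow_of_nonneg ENNReal.toReal_nonneg hp, ENNReal.ofReal_toReal hM]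

section WeightedNorms

variable {n : ℕ} {p : ℝ}

lemma ofReal_le_normStar (φ : EuclideanSpace ℝ (Fin n) → ℝ) (x : EuclideanSpace ℝ (Fin n)) :
    ENNReal.ofReal (‖x‖ ^ (2 / (p - 1)) * |φ x|) ≤ normStar n p (2 / (p - 1)) φ := by
  unfold normStar
  rcases le_total ‖x‖ 1 with hx | hx
  · exact le_trans (le_iSup_of_le (⟨x, hx⟩ : {y : EuclideanSpace ℝ (Fin n) // ‖y‖ ≤ 1}) le_rfl)
      le_self_add
  · exact le_trans (le_iSup_of_le (⟨x, hx⟩ : {y : EuclideanSpace ℝ (Fin n) // 1 ≤ ‖y‖}) le_rfl)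
      le_add_self

lemma rpow_norm_mul_abs_le_toReal_normStar {φ : EuclideanSpace ℝ (Fin n) → ℝ}
    (hφ : normStar n p (2 / (p - 1)) φ ≠ ⊤) (x : EuclideanSpace ℝ (Fin n)) :
    ‖x‖ ^ (2 / (p - 1)) * |φ x| ≤ (normStar n p (2 / (p - 1)) φ).toReal :=
  (ENNReal.ofReal_le_iff_le_toReal hφ).1 (ofReal_le_normStar φ x)

lemma normStarStar_le_of_forall_le {h : EuclideanSpace ℝ (Fin n) → ℝ} {B : ℝ}
    (hB : ∀ x, ‖x‖ ^ (2 + 2 / (p - 1)) * |h x| ≤ B) :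
    normStarStar n p (2 / (p - 1)) h ≤ 2 * ENNReal.ofReal B := by
  rw [two_mul, normStarStar]
  exact add_le_add (iSup_le fun x => ENNReal.ofReal_le_ofReal (hB x))
    (iSup_le fun x => ENNReal.ofReal_le_ofReal (hB x))

variable {C₀ : ℝ} {w φ : EuclideanSpace ℝ (Fin n) → ℝ}

lemma normStarStar_nonlinearTerm_le (hp : 1 < p) (hC₀ : 0 ≤ C₀)
    (hw₀ : ∀ x, 0 ≤ w x) (hw : ∀ x, w x ≤ C₀ * (1 + ‖x‖) ^ (-(2 / (p - 1))))
    (hφ : ∀ x, 0 ≤ w x + φ x) (hM : normStar n p (2 / (p - 1)) φ ≠ ⊤) {B : ℝ}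
    (hB : ∀ a t, 0 ≤ a → a ≤ C₀ → 0 ≤ a + t → |t| ≤ (normStar n p (2 / (p - 1)) φ).toReal →
      powRemainder p a t ≤ B) :
    normStarStar n p (2 / (p - 1)) (nonlinearTerm p w φ) ≤ 2 * ENNReal.ofReal B := by
  refine normStarStar_le_of_forall_le fun x => ?_
  have hσ : 0 < 2 / (p - 1) := div_pos two_pos (sub_pos.2 hp)
  have hweight : ‖x‖ ^ (2 + 2 / (p - 1)) = (‖x‖ ^ (2 / (p - 1))) ^ p := by
    rw [← Real.rpow_mul (norm_nonneg x)]
    congr 1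
    field_simp [(sub_pos.2 hp).ne']
    ring
  have hN : |nonlinearTerm p w φ x| = powRemainder p (w x) (φ x) := by
    rw [← abs_of_nonneg (powRemainder_nonneg hp.le (hw₀ x) (hφ x)), ← abs_neg, powRemainder,
      nonlinearTerm]
    ring_nf
  rw [hN, hweight, ← powRemainder_mul_mul (by linarith) (by positivity) (hw₀ x) (hφ x)]
  apply hB
  · exact mul_nonneg (by positivity) (hw₀ x)
  · exact Real.rpow_mul_le_of_le_mul_one_add_rpow_neg (norm_nonneg x) hσ.le hC₀ (hw x)
  · rw [← mul_add]; exact mul_nonneg (by positivity) (hφ x)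
  · rw [abs_mul, abs_of_nonneg (by positivity)]; exact rpow_norm_mul_abs_le_toReal_normStar hM x

lemma normStarStar_nonlinearTerm_le_of_two_le (hp : 2 ≤ p) (hC₀ : 0 ≤ C₀)
    (hw₀ : ∀ x, 0 ≤ w x) (hw : ∀ x, w x ≤ C₀ * (1 + ‖x‖) ^ (-(2 / (p - 1))))
    (hφ : ∀ x, 0 ≤ w x + φ x) (hM : normStar n p (2 / (p - 1)) φ ≠ ⊤) :
    normStarStar n p (2 / (p - 1)) (nonlinearTerm p w φ)
      ≤ ENNReal.ofReal (2 * (p * (p - 1) * 2 ^ (p - 2) * (1 + C₀ ^ (p - 2))))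
        * (normStar n p (2 / (p - 1)) φ ^ 2 + normStar n p (2 / (p - 1)) φ ^ p) := by
  set M := normStar n p (2 / (p - 1)) φ
  have hK : 0 ≤ p * (p - 1) * 2 ^ (p - 2) * (1 + C₀ ^ (p - 2)) := by
    have : 0 ≤ p - 1 := by linarith
    positivity
  calc _ ≤ 2 * ENNReal.ofReal
        (p * (p - 1) * 2 ^ (p - 2) * (1 + C₀ ^ (p - 2)) * (M.toReal ^ 2 + M.toReal ^ p)) :=
      normStarStar_nonlinearTerm_le (by linarith) hC₀ hw₀ hw hφ hM fun _ _ ha haC hat ht =>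
        powRemainder_le_of_two_le_of_le hp ha haC hat ht
    _ = _ := by
      rw [ENNReal.ofReal_mul hK, ENNReal.ofReal_add (sq_nonneg M.toReal) (by positivity),
        ENNReal.ofReal_pow ENNReal.toReal_nonneg, ENNReal.ofReal_toReal hM,
        ENNReal.ofReal_toReal_rpow hM (by linarith), ENNReal.ofReal_mul zero_le_two,
        ENNReal.ofReal_ofNat, ← mul_assoc]

lemma normStarStar_nonlinearTerm_le_of_le_two (hp₁ : 1 < p) (hp₂ : p ≤ 2) (hC₀ : 0 ≤ C₀)
    (hw₀ : ∀ x, 0 ≤ w x) (hw : ∀ x, w x ≤ C₀ * (1 + ‖x‖) ^ (-(2 / (p - 1))))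
    (hφ : ∀ x, 0 ≤ w x + φ x) (hM : normStar n p (2 / (p - 1)) φ ≠ ⊤) :
    normStarStar n p (2 / (p - 1)) (nonlinearTerm p w φ)
      ≤ ENNReal.ofReal (2 * p) * normStar n p (2 / (p - 1)) φ ^ p := calc
  _ ≤ 2 * ENNReal.ofReal (p * (normStar n p (2 / (p - 1)) φ).toReal ^ p) :=
    normStarStar_nonlinearTerm_le hp₁ hC₀ hw₀ hw hφ hM fun _ _ ha _ hat ht =>
      powRemainder_le_of_le_two_of_le hp₁.le hp₂ ha hat ht
  _ = _ := by
    rw [ENNReal.ofReal_mul (by linarith), ENNReal.ofReal_toReal_rpow hM (by linarith),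
      ENNReal.ofReal_mul zero_le_two, ENNReal.ofReal_ofNat, ← mul_assoc]

end WeightedNorms

/-- for `n ≥ 3`, `p > (n+2)/(n-2)`, `σ = 2/(p-1)`, and
`0 < w(x) ≤ C₀(1+|x|)^{-2/(p-1)}`, with `N(φ) = -(w+φ)ᵖ + wᵖ + p w^{p-1} φ`, there is
`C > 0` such that for every `φ` with `w + φ ≥ 0` and `‖φ‖* < ∞`:
`‖N(φ)‖** ≤ C(‖φ‖*² + ‖φ‖*ᵖ)` if `p ≥ 2`, `‖N(φ)‖** ≤ C ‖φ‖*ᵖ` if `1 < p < 2`, and in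
either case `‖N(φ)‖** ≤ C(‖φ‖*² + ‖φ‖*ᵖ)`. -/
theorem nonlinear_term_estimate
    (n : ℕ) (hn : 3 ≤ n) (p : ℝ) (hp : ((n : ℝ) + 2) / ((n : ℝ) - 2) < p)
    (C₀ : ℝ) (hC₀ : 0 < C₀)
    (w : EuclideanSpace ℝ (Fin n) → ℝ)
    (hw : ∀ x, 0 < w x ∧ w x ≤ C₀ * (1 + ‖x‖) ^ (-(2 / (p - 1)))) :
    ∃ C : ℝ, 0 < C ∧
      ∀ φ : EuclideanSpace ℝ (Fin n) → ℝ,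
        (∀ x, 0 ≤ w x + φ x) → normStar n p (2 / (p - 1)) φ < ⊤ →
        (2 ≤ p →
          normStarStar n p (2 / (p - 1))
              (fun x => -(w x + φ x) ^ p + w x ^ p + p * w x ^ (p - 1) * φ x)
            ≤ ENNReal.ofReal C * (normStar n p (2 / (p - 1)) φ ^ (2 : ℕ)
                + normStar n p (2 / (p - 1)) φ ^ p)) ∧
        (p < 2 →
          normStarStar n p (2 / (p - 1))
              (fun x => -(w x + φ x) ^ p + w x ^ p + p * w x ^ (p - 1) * φ x)
            ≤ ENNReal.ofReal C * normStar n p (2 / (p - 1)) φ ^ p) ∧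
        normStarStar n p (2 / (p - 1))
            (fun x => -(w x + φ x) ^ p + w x ^ p + p * w x ^ (p - 1) * φ x)
          ≤ ENNReal.ofReal C * (normStar n p (2 / (p - 1)) φ ^ (2 : ℕ)
              + normStar n p (2 / (p - 1)) φ ^ p) := by
  have hp₁ : 1 < p := one_lt_of_add_two_div_sub_two_lt (by exact_mod_cast hn) hp
  set K := p * (p - 1) * 2 ^ (p - 2) * (1 + C₀ ^ (p - 2))
  have hK : 0 ≤ K := by
    have : 0 ≤ p - 1 := by linarith
    positivity
  have hw₀ : ∀ x, 0 ≤ w x := fun x => (hw x).1.le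
  have hwC : ∀ x, w x ≤ C₀ * (1 + ‖x‖) ^ (-(2 / (p - 1))) := fun x => (hw x).2
  refine ⟨2 * (p + K), by positivity, fun φ hφ hM => ?_⟩
  have hge : 2 ≤ p → normStarStar n p (2 / (p - 1)) (nonlinearTerm p w φ)
      ≤ ENNReal.ofReal (2 * (p + K))
        * (normStar n p (2 / (p - 1)) φ ^ 2 + normStar n p (2 / (p - 1)) φ ^ p) := fun hp₂ =>
    (normStarStar_nonlinearTerm_le_of_two_le hp₂ hC₀.le hw₀ hwC hφ hM.ne).trans
      (by gcongr; linarith)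
  have hle : p ≤ 2 → normStarStar n p (2 / (p - 1)) (nonlinearTerm p w φ)
      ≤ ENNReal.ofReal (2 * (p + K)) * normStar n p (2 / (p - 1)) φ ^ p := fun hp₂ =>
    (normStarStar_nonlinearTerm_le_of_le_two hp₁ hp₂ hC₀.le hw₀ hwC hφ hM.ne).trans
      (by gcongr; linarith)
  refine ⟨hge, fun hp₂ => hle hp₂.le, ?_⟩
  rcases le_total 2 p with hp₂ | hp₂
  · exact hge hp₂
  · exact (hle hp₂).trans (by gcongr; exact le_add_self)
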